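/- Let η = 4ζ/σ_α with ζ, σ_α > 0 and let υ = (−ζ + (σ_α/4)·φ(η)/(1 − Φ(η)))/(ζ + (σ_α/4)·φ(η)/Φ(η)). Then (1 + υ)(1 − Φ(η)) < 1, i.e., the total rare-event probability P_r is strictly less than 1, provided ζ + (σ_α/4)φ(η)/Φ(η) > 0. -/
import Mathlib

open Real MeasureTheory

noncomputable def stdNormalPdf (x : ℝ) : ℝ := Real.exp (-x ^ 2 / 2) / Real.sqrt (2 * π)

noncomputable def stdNormalCdf (x : ℝ) : ℝ := ∫ t in Set.Iic x, stdNormalPdf t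

lemma pdf_pos (x : ℝ) : 0 < stdNormalPdf x := by
  unfold stdNormalPdf
  positivity

lemma pdf_eq (x : ℝ) : stdNormalPdf x = Real.exp (-(1/2) * x ^ 2) / Real.sqrt (2 * π) := by
  unfold stdNormalPdf; ring_nf

lemma integrable_pdf : Integrable stdNormalPdf := by
  have h := (integrable_exp_neg_mul_sq (by norm_num : (0:ℝ) < 1/2)).div_const (Real.sqrt (2 * π))
  convert h using 1
  ext x
  rw [pdf_eq]

lemma integral_pdf : ∫ x, stdNormalPdf x = 1 := by
  have h : ∫ x : ℝ, Real.exp (-(1/2) * x ^ 2) = Real.sqrt (π / (1/2)) :=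
    integral_gaussian (1/2)
  have hs : Real.sqrt (π / (1/2)) = Real.sqrt (2 * π) := by norm_num; ring_nf
  simp only [pdf_eq, integral_div, h, hs]
  rw [div_self]
  positivity

lemma cdf_pos (x : ℝ) : 0 < stdNormalCdf x := by
  unfold stdNormalCdf
  apply (setIntegral_pos_iff_support_of_nonneg_ae ?_ ?_).2
  · have : Function.support stdNormalPdf = Set.univ := by
      ext y; simp [Function.mem_support, (pdf_pos y).ne']
    rw [this]
    simp [Real.volume_Iic]
  · filter_upwards with y using (pdf_pos y).le
  · exact integrable_pdf.integrableOn

lemma cdf_lt_one (x : ℝ) : stdNormalCdf x < 1 := by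
  have hsplit : stdNormalCdf x + ∫ t in Set.Ioi x, stdNormalPdf t = 1 := by
    rw [← integral_pdf]
    exact intervalIntegral.integral_Iic_add_Ioi integrable_pdf.integrableOn integrable_pdf.integrableOn
  have hpos : 0 < ∫ t in Set.Ioi x, stdNormalPdf t := by
    apply (setIntegral_pos_iff_support_of_nonneg_ae ?_ ?_).2
    · have : Function.support stdNormalPdf = Set.univ := by
        ext y; simp [Function.mem_support, (pdf_pos y).ne']
      rw [this]
      simp [Real.volume_Ioi]
    · filter_upwards with y using (pdf_pos y).le
    · exact integrable_pdf.integrableOn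
  linarith

theorem rare_event_probability_lt_one
    (ζ σα : ℝ) (hζ : 0 < ζ) (hσα : 0 < σα)
    (η : ℝ) (hη : η = 4 * ζ / σα)
    (hden : 0 < ζ + (σα / 4) * stdNormalPdf η / stdNormalCdf η)
    (υ : ℝ)
    (hυ : υ = (-ζ + (σα / 4) * stdNormalPdf η / (1 - stdNormalCdf η)) /
      (ζ + (σα / 4) * stdNormalPdf η / stdNormalCdf η)) :
    (1 + υ) * (1 - stdNormalCdf η) < 1 := by
  set Φ := stdNormalCdf η with hΦ
  set p := stdNormalPdf η with hp
  have hΦ0 : 0 < Φ := cdf_pos η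
  have hΦ1 : Φ < 1 := cdf_lt_one η
  have hp0 : 0 < p := pdf_pos η
  have h1Φ : 0 < 1 - Φ := by linarith
  have key : (1 + υ) * (1 - Φ) = (σα / 4 * p / Φ) / (ζ + σα / 4 * p / Φ) := by
    rw [hυ]
    field_simp
    ring
  rw [key]
  rw [div_lt_one hden]
  have : 0 < σα / 4 * p / Φ := by positivity
  linarith
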